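/- arXiv:2202.09068 — 3 statements merged into one kernel-verified Lean document; each statement's English description precedes it below -/
import Mathlib

section
/- Let G be a daisy cube of dimension n, i.e., the subgraph of the hypercube Q_n induced by a nonempty downward-closed vertex set V ⊆ {0,1}^n. Then twice the Wiener index of G minus the Mostar index of G equals |V(G)|·|E(G)|, that is, 2·W(G) − Mo(G) = |V(G)|·|E(G)|. -/
/-!
In a daisy cube the graph distance is the Hamming distance: two vertices are joined by a walk
that repeatedly lowers a differing coordinate of whichever endpoint has a `1` there, and
downward closure keeps the walk inside `V`. Write `tᵢ` and `fᵢ` for the numbers of vertices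
whose `i`-th coordinate is `1`, resp. `0`. Counting the coordinates in which two vertices differ
gives `2 W = ∑ᵢ 2 tᵢ fᵢ`. The edges in direction `i` are exactly the pairs `{v - eᵢ, v}` with
`vᵢ = 1`, so there are `tᵢ` of them, and on each the vertices closer to `v - eᵢ` (resp. `v`)
are those with `i`-th coordinate `0` (resp. `1`). Lowering coordinate `i` shows `tᵢ ≤ fᵢ`, hence
`Mo = ∑ᵢ tᵢ (fᵢ - tᵢ)` and `2 W - Mo = ∑ᵢ tᵢ (tᵢ + fᵢ) = |V| · |E|`.
-/

/-- Vertices of the hypercube `Q_n`: binary strings of length `n`. -/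
abbrev Vtx (n : ℕ) := Fin n → Bool

/-- The subgraph of the hypercube `Q_n` induced by a set `V` of vertices:
two vertices are adjacent iff they differ in precisely one coordinate
(i.e. their Hamming distance is `1`). -/
def cubeGraph {n : ℕ} (V : Finset (Vtx n)) : SimpleGraph {u : Vtx n // u ∈ V} where
  Adj u v := hammingDist u.1 v.1 = 1
  symm := ⟨fun u v h => (hammingDist_comm v.1 u.1).trans h⟩
  loopless := ⟨fun u h => by simp [hammingDist_self] at h⟩

instance {n : ℕ} {V : Finset (Vtx n)} : DecidableRel (cubeGraph V).Adj :=
  fun u v => inferInstanceAs (Decidable (hammingDist u.1 v.1 = 1))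

/-- A set of vertices of `Q_n` is downward closed if `u ≤ v` componentwise
and `v ∈ V` imply `u ∈ V`. -/
def DownClosed {n : ℕ} (V : Finset (Vtx n)) : Prop :=
  ∀ u v : Vtx n, (∀ i, u i ≤ v i) → v ∈ V → u ∈ V

/-- The Wiener index: the sum of graph distances over all unordered pairs of vertices. -/
noncomputable def wiener {α : Type*} [Fintype α] [DecidableEq α] (G : SimpleGraph α) : ℕ :=
  ∑ p : Sym2 α, Sym2.lift ⟨fun u v => G.dist u v, fun _ _ => SimpleGraph.dist_comm⟩ p

/-- `closerCount G u v` is the number of vertices of `G` strictly closer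
(in graph distance) to `u` than to `v`. -/
noncomputable def closerCount {α : Type*} (G : SimpleGraph α) (u v : α) : ℕ :=
  Nat.card {w : α // G.dist w u < G.dist w v}

/-- The Mostar index: `∑_{uv ∈ E(G)} |n_{u,v} - n_{v,u}|`. -/
noncomputable def mostar {α : Type*} [Fintype α] [DecidableEq α] (G : SimpleGraph α)
    [DecidableRel G.Adj] : ℕ :=
  ∑ e ∈ G.edgeFinset,
    Sym2.lift ⟨fun u v => ((closerCount G u v : ℤ) - (closerCount G v u : ℤ)).natAbs,
      fun a b => by
        show (_ - _ : ℤ).natAbs = (_ - _ : ℤ).natAbs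
        rw [← Int.natAbs_neg, neg_sub]⟩ e


open Finset Function SimpleGraph

theorem Finset.card_filter_univ_subtype {α : Type*} (s : Finset α) (p : α → Prop)
    [DecidablePred p] : #{v : {x // x ∈ s} | p v.1} = #{x ∈ s | p x} := by
  simp only [card_filter]
  exact sum_coe_sort s fun x => if p x then 1 else 0

theorem Finset.natCard_subtype_val {α : Type*} (s : Finset α) (p : α → Prop) [DecidablePred p] :
    Nat.card {v : {x // x ∈ s} // p v.1} = #{x ∈ s | p x} := by
  rw [Nat.card_eq_fintype_card, Fintype.card_subtype, card_filter_univ_subtype]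

theorem two_nsmul_sum_sym2_lift {α M : Type*} [Fintype α] [DecidableEq α] [AddCommMonoid M]
    (f : α → α → M) (hf : ∀ a b, f a b = f b a) (hdiag : ∀ a, f a a = 0) :
    2 • ∑ p : Sym2 α, Sym2.lift ⟨f, hf⟩ p = ∑ a, ∑ b, f a b := by
  have hfiber : ∀ p : Sym2 α,
      2 • Sym2.lift ⟨f, hf⟩ p = ∑ x : α × α with s(x.1, x.2) = p, f x.1 x.2 := by
    refine Sym2.ind fun a b => ?_
    have hpre : univ.filter (fun x : α × α => s(x.1, x.2) = s(a, b)) = {(a, b), (b, a)} := by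
      ext ⟨x, y⟩; simp
    rw [hpre, Sym2.lift_mk]
    rcases eq_or_ne a b with rfl | hab
    · simp [hdiag]
    · rw [sum_pair fun h => hab (Prod.ext_iff.1 h).1, hf b a, two_nsmul]
  rw [smul_sum, sum_congr rfl fun p _ => hfiber p, sum_fiberwise univ fun x : α × α => s(x.1, x.2),
    ← univ_product_univ, sum_product]

theorem two_mul_wiener {α : Type*} [Fintype α] [DecidableEq α] (G : SimpleGraph α) :
    2 * wiener G = ∑ u, ∑ v, G.dist u v :=
  two_nsmul_sum_sym2_lift _ _ fun _ => dist_self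

section Hamming

variable {ι : Type*} [Fintype ι] {β : Type*} [DecidableEq β]

theorem hammingDist_update_right_add [DecidableEq ι] (w x : ι → β) (i : ι) (b : β) :
    hammingDist w (update x i b) + (if w i ≠ x i then 1 else 0) =
      hammingDist w x + (if w i ≠ b then 1 else 0) := by
  simp only [hammingDist, card_filter]
  rw [sum_congr rfl fun j _ => apply_update (fun j (y : β) => if w j ≠ y then 1 else 0) x i b j,
    sum_update_of_mem (mem_univ i), ← add_sum_erase _ _ (mem_univ i), sdiff_singleton_eq_erase]
  ring

theorem hammingDist_update_self_left [DecidableEq ι] {x : ι → β} {i : ι} {b : β}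
    (hb : b ≠ x i) : hammingDist (update x i b) x = 1 := by
  have h := hammingDist_update_right_add x x i b
  rwa [hammingDist_comm, if_neg (not_not.2 rfl), if_pos hb.symm, hammingDist_self] at h

theorem hammingDist_update_right_lt_iff [DecidableEq ι] {w x : ι → β} {i : ι} {b : β}
    (hb : b ≠ x i) : hammingDist w (update x i b) < hammingDist w x ↔ w i = b := by
  have h := hammingDist_update_right_add w x i b
  refine ⟨fun hlt => by_contra fun hwb => ?_, fun hwb => ?_⟩
  · rw [if_pos hwb] at h; split_ifs at h <;> omega
  · rw [if_pos (hwb ▸ hb), if_neg (not_not.2 hwb)] at h; omega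

theorem hammingDist_lt_update_right_iff [DecidableEq ι] {w x : ι → β} {i : ι} {b : β}
    (hb : b ≠ x i) : hammingDist w x < hammingDist w (update x i b) ↔ w i = x i := by
  have h := hammingDist_update_right_add w x i b
  refine ⟨fun hlt => by_contra fun hwx => ?_, fun hwx => ?_⟩
  · rw [if_pos hwx] at h; split_ifs at h <;> omega
  · rw [if_neg (not_not.2 hwx), if_pos (hwx ▸ hb.symm)] at h; omega

theorem exists_eq_update_of_hammingDist_eq_one [DecidableEq ι] {x y : ι → β}
    (h : hammingDist x y = 1) : ∃ i, x i ≠ y i ∧ x = update y i (x i) := by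
  obtain ⟨i, hi⟩ := card_eq_one.1 h
  have hdiff : ∀ j, x j ≠ y j ↔ j = i := fun j => by simpa using congrArg (j ∈ ·) hi
  refine ⟨i, (hdiff i).2 rfl, funext fun j => ?_⟩
  rcases eq_or_ne j i with rfl | hj
  · simp
  · rw [update_of_ne hj]; exact not_not.1 (mt (hdiff j).1 hj)

omit [Fintype ι] in
theorem card_filter_true_add_card_filter_false (S : Finset (ι → Bool)) (i : ι) :
    #{x ∈ S | x i = true} + #{x ∈ S | x i = false} = #S := by
  simpa only [Bool.not_eq_true] using card_filter_add_card_filter_not (s := S) (· i = true)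

theorem sum_sum_hammingDist (S : Finset (ι → Bool)) :
    ∑ x ∈ S, ∑ y ∈ S, hammingDist x y =
      ∑ i, 2 * (#{x ∈ S | x i = true} * #{x ∈ S | x i = false}) := by
  have hne : ∀ a b : Bool, (if a ≠ b then 1 else 0 : ℕ) =
      (if a = true then 1 else 0) * (if b = false then 1 else 0) +
        (if a = false then 1 else 0) * (if b = true then 1 else 0) := by decide
  calc ∑ x ∈ S, ∑ y ∈ S, hammingDist x y
      = ∑ x ∈ S, ∑ i, ∑ y ∈ S, if x i ≠ y i then 1 else 0 := by
        simp only [hammingDist, card_filter]; exact sum_congr rfl fun _ _ => sum_comm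
    _ = ∑ i, ∑ x ∈ S, ∑ y ∈ S, if x i ≠ y i then 1 else 0 := sum_comm
    _ = _ := sum_congr rfl fun i _ => by
        simp only [hne, sum_add_distrib, ← sum_mul_sum, ← card_filter]; ring

end Hamming

namespace DownClosed

variable {n : ℕ} {V : Finset (Vtx n)}

theorem update_false_mem (hV : DownClosed V) {v : Vtx n} (hv : v ∈ V) (i : Fin n) :
    update v i false ∈ V :=
  hV _ _ (update_le_self_iff.2 (Bool.false_le _)) hv

def lower (hV : DownClosed V) (v : {x // x ∈ V}) (i : Fin n) : {x // x ∈ V} :=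
  ⟨update v.1 i false, hV.update_false_mem v.2 i⟩

@[simp]
theorem coe_lower (hV : DownClosed V) (v : {x // x ∈ V}) (i : Fin n) :
    (hV.lower v i : Vtx n) = update v.1 i false :=
  rfl

theorem card_filter_true_le_card_filter_false (hV : DownClosed V) (i : Fin n) :
    #{x ∈ V | x i = true} ≤ #{x ∈ V | x i = false} := by
  refine card_le_card_of_injOn (update · i false) (fun x hx => ?_) fun x hx y hy hxy => ?_
  · rw [coe_filter] at hx ⊢
    exact ⟨hV.update_false_mem hx.1 i, update_self i false x⟩
  · rw [coe_filter] at hx hy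
    calc x = update (update x i false) i true := by rw [update_idem, ← hx.2, update_eq_self]
      _ = y := by
        rw [show update x i false = update y i false from hxy, update_idem, ← hy.2, update_eq_self]

end DownClosed

namespace cubeGraph

variable {n : ℕ} {V : Finset (Vtx n)}

theorem hammingDist_le_length {u v : {x // x ∈ V}} (p : (cubeGraph V).Walk u v) :
    hammingDist u.1 v.1 ≤ p.length := by
  induction p with
  | nil => simp
  | @cons a b c hab _ ih =>
    have hab : hammingDist a.1 b.1 = 1 := hab
    rw [Walk.length_cons]
    linarith [hammingDist_triangle a.1 b.1 c.1]

theorem adj_lower (hV : DownClosed V) {v : {x // x ∈ V}} {i : Fin n} (hv : v.1 i = true) :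
    (cubeGraph V).Adj (hV.lower v i) v :=
  hammingDist_update_self_left (by simp [hv])

theorem exists_walk_length_eq_hammingDist (hV : DownClosed V) (u v : {x // x ∈ V}) :
    ∃ p : (cubeGraph V).Walk u v, p.length = hammingDist u.1 v.1 := by
  induction h : hammingDist u.1 v.1 generalizing u v with
  | zero => obtain rfl := Subtype.ext (hammingDist_eq_zero.1 h); exact ⟨.nil, rfl⟩
  | succ d ih =>
    obtain ⟨i, hi⟩ := Function.ne_iff.1 ((hammingDist_pos (x := u.1) (y := v.1)).1 (by omega))
    wlog hu : u.1 i = true generalizing u v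
    · obtain ⟨p, hp⟩ := this v u (by rwa [hammingDist_comm]) hi.symm (by simpa [hu] using hi)
      exact ⟨p.reverse, by rw [Walk.length_reverse, hp]⟩
    have hd : hammingDist (hV.lower u i).1 v.1 = d := by
      have := hammingDist_update_right_add v.1 u.1 i false
      rw [if_pos hi.symm, if_neg (by simpa [hu] using hi.symm), hammingDist_comm v.1 u.1, h,
        hammingDist_comm] at this
      exact Nat.add_right_cancel this
    obtain ⟨p, hp⟩ := ih _ _ hd
    exact ⟨.cons (adj_lower hV hu).symm p, by rw [Walk.length_cons, hp]⟩

theorem dist_eq_hammingDist (hV : DownClosed V) (u v : {x // x ∈ V}) :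
    (cubeGraph V).dist u v = hammingDist u.1 v.1 := by
  obtain ⟨p, hp⟩ := exists_walk_length_eq_hammingDist hV u v
  obtain ⟨q, hq⟩ := p.reachable.exists_walk_length_eq_dist
  exact le_antisymm (hp ▸ dist_le p) (hq ▸ hammingDist_le_length q)

theorem two_mul_wiener_eq (hV : DownClosed V) :
    2 * wiener (cubeGraph V) = ∑ i, 2 * (#{x ∈ V | x i = true} * #{x ∈ V | x i = false}) := by
  rw [two_mul_wiener, ← sum_sum_hammingDist]
  simp only [dist_eq_hammingDist hV]
  exact (sum_coe_sort V _).trans (sum_congr rfl fun x _ => sum_coe_sort V _)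

theorem exists_eq_lower_of_adj (hV : DownClosed V) {a b : {x // x ∈ V}}
    (h : (cubeGraph V).Adj a b) :
    ∃ i, (b.1 i = true ∧ a = hV.lower b i) ∨ (a.1 i = true ∧ b = hV.lower a i) := by
  obtain ⟨i, hi, ha⟩ := exists_eq_update_of_hammingDist_eq_one h
  refine ⟨i, ?_⟩
  cases hai : a.1 i
  · rw [hai] at hi ha
    exact .inl ⟨by simpa using hi.symm, Subtype.ext ha⟩
  · rw [hai] at hi ha
    refine .inr ⟨rfl, Subtype.ext ?_⟩
    rw [DownClosed.coe_lower, ha, update_idem, ← Bool.eq_false_iff.2 hi.symm, update_eq_self]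

theorem sum_edgeFinset (hV : DownClosed V) {M : Type*} [AddCommMonoid M]
    (g : Sym2 {x // x ∈ V} → M) :
    ∑ e ∈ (cubeGraph V).edgeFinset, g e = ∑ i, ∑ v with v.1 i = true, g s(hV.lower v i, v) := by
  have hprod : ∑ i, ∑ v with v.1 i = true, g s(hV.lower v i, v) =
      ∑ p : Fin n × {x // x ∈ V} with p.2.1 p.1 = true, g s(hV.lower p.2 p.1, p.2) := by
    rw [sum_filter, ← univ_product_univ, sum_product]
    simp only [sum_filter]
  rw [hprod]
  symm
  refine sum_nbij (fun p => s(hV.lower p.2 p.1, p.2)) (fun p hp => ?_)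
    (fun p hp q hq hpq => ?_) (fun e he => ?_) fun _ _ => rfl
  · exact mem_edgeFinset.2 (adj_lower hV (mem_filter.1 hp).2)
  · obtain ⟨i, v⟩ := p
    obtain ⟨j, w⟩ := q
    dsimp only at hpq
    have hv : v.1 i = true := (mem_filter.1 hp).2
    have hw : w.1 j = true := (mem_filter.1 hq).2
    rcases Sym2.eq_iff.1 hpq with ⟨hlow, rfl⟩ | ⟨hlow, hup⟩
    · obtain rfl : i = j := by
        by_contra hij
        have := congrFun (congrArg Subtype.val hlow) i
        simp [update_of_ne hij, hv] at this
      rfl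
    · have hvj : v.1 j = false := by rw [hup, DownClosed.coe_lower, update_self]
      have hwj : w.1 j = false := by
        rw [← hlow, DownClosed.coe_lower]
        rcases eq_or_ne j i with rfl | hji
        · exact update_self j false v.1
        · exact (update_of_ne hji _ _).trans hvj
      simp [hwj] at hw
  · induction e using Sym2.inductionOn with
    | hf a b =>
      have hab : (cubeGraph V).Adj a b := mem_edgeFinset.1 he
      obtain ⟨i, ⟨hb, rfl⟩ | ⟨ha, rfl⟩⟩ := exists_eq_lower_of_adj hV hab
      · exact ⟨(i, b), mem_filter.2 ⟨mem_univ _, hb⟩, rfl⟩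
      · exact ⟨(i, a), mem_filter.2 ⟨mem_univ _, ha⟩, Sym2.eq_swap⟩

theorem card_edgeFinset (hV : DownClosed V) :
    #(cubeGraph V).edgeFinset = ∑ i, #{x ∈ V | x i = true} := by
  simp only [card_eq_sum_ones (cubeGraph V).edgeFinset, sum_edgeFinset hV, ← card_eq_sum_ones]
  exact sum_congr rfl fun i _ => card_filter_univ_subtype V (· i = true)

theorem closerCount_lower_self (hV : DownClosed V) {v : {x // x ∈ V}} {i : Fin n}
    (hv : v.1 i = true) :
    closerCount (cubeGraph V) (hV.lower v i) v = #{x ∈ V | x i = false} := by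
  have hiff : ∀ w : {x // x ∈ V},
      (cubeGraph V).dist w (hV.lower v i) < (cubeGraph V).dist w v ↔ w.1 i = false := fun w => by
    rw [dist_eq_hammingDist hV, dist_eq_hammingDist hV]
    exact hammingDist_update_right_lt_iff (by simp [hv])
  rw [closerCount, Nat.card_congr (Equiv.subtypeEquivRight hiff)]
  exact natCard_subtype_val V (· i = false)

theorem closerCount_self_lower (hV : DownClosed V) {v : {x // x ∈ V}} {i : Fin n}
    (hv : v.1 i = true) :
    closerCount (cubeGraph V) v (hV.lower v i) = #{x ∈ V | x i = true} := by
  have hiff : ∀ w : {x // x ∈ V},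
      (cubeGraph V).dist w v < (cubeGraph V).dist w (hV.lower v i) ↔ w.1 i = true := fun w => by
    rw [dist_eq_hammingDist hV, dist_eq_hammingDist hV, ← hv]
    exact hammingDist_lt_update_right_iff (by simp [hv])
  rw [closerCount, Nat.card_congr (Equiv.subtypeEquivRight hiff)]
  exact natCard_subtype_val V (· i = true)

theorem mostar_eq (hV : DownClosed V) :
    (mostar (cubeGraph V) : ℤ) = ∑ i, (#{x ∈ V | x i = true} : ℤ) *
      (#{x ∈ V | x i = false} - #{x ∈ V | x i = true}) := by
  rw [mostar, sum_edgeFinset hV, Nat.cast_sum]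
  refine sum_congr rfl fun i _ => ?_
  have hle : (#{x ∈ V | x i = true} : ℤ) ≤ #{x ∈ V | x i = false} := by
    exact_mod_cast hV.card_filter_true_le_card_filter_false i
  simp only [Sym2.lift_mk]
  rw [sum_congr rfl fun v hv => by
      rw [closerCount_lower_self hV (mem_filter.1 hv).2,
        closerCount_self_lower hV (mem_filter.1 hv).2],
    sum_const, card_filter_univ_subtype V (· i = true), smul_eq_mul, Nat.cast_mul,
    Int.natCast_natAbs, abs_of_nonneg (sub_nonneg.2 hle)]

end cubeGraph

theorem daisy_two_wiener_sub_mostar_general {n : ℕ} (V : Finset (Vtx n))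
    (hdc : DownClosed V) :
    2 * (wiener (cubeGraph V) : ℤ) - (mostar (cubeGraph V) : ℤ) =
      (V.card : ℤ) * ((cubeGraph V).edgeFinset.card : ℤ) := by
  have hW : 2 * (wiener (cubeGraph V) : ℤ) =
      ∑ i, 2 * ((#{x ∈ V | x i = true} : ℤ) * #{x ∈ V | x i = false}) := by
    exact_mod_cast cubeGraph.two_mul_wiener_eq hdc
  rw [hW, cubeGraph.mostar_eq hdc, cubeGraph.card_edgeFinset hdc, Nat.cast_sum, mul_sum,
    ← sum_sub_distrib]
  refine sum_congr rfl fun i _ => ?_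
  have hcard : (#{x ∈ V | x i = true} : ℤ) + #{x ∈ V | x i = false} = #V := by
    exact_mod_cast card_filter_true_add_card_filter_false V i
  rw [← hcard]
  ring

/-- For a daisy cube `G` (the subgraph of `Q_n` induced by a nonempty
downward-closed vertex set `V`), `2·W(G) - Mo(G) = |V(G)|·|E(G)|`. -/
theorem daisy_two_wiener_sub_mostar {n : ℕ} (V : Finset (Vtx n))
    (hne : V.Nonempty) (hdc : DownClosed V) :
    2 * (wiener (cubeGraph V) : ℤ) - (mostar (cubeGraph V) : ℤ) =
      (V.card : ℤ) * ((cubeGraph V).edgeFinset.card : ℤ) :=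
  daisy_two_wiener_sub_mostar_general V hdc
end

section
/- Let G be a daisy cube of dimension n, i.e., the subgraph of the hypercube Q_n induced by a nonempty downward-closed vertex set V ⊆ {0,1}^n. Then the Mostar index of G satisfies Mo(G) = Σ_{i=1}^n |W_{(i,1)}(G)|·(|W_{(i,0)}(G)| − |W_{(i,1)}(G)|), where W_{(i,χ)}(G) is the set of vertices of G whose i-th coordinate equals χ. -/
/-- The semicube `W_{(i,χ)}`: vertices of the induced subgraph on `V`
whose `i`-th coordinate equals `χ` (`false` codes `0`, `true` codes `1`). -/
def semicube {n : ℕ} (V : Finset (Vtx n)) (i : Fin n) (χ : Bool) : Finset (Vtx n) :=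
  V.filter (fun u => u i = χ)

/-!
In a daisy cube the graph distance is the Hamming distance: from `u` to `v` one can walk down
to the meet `u ⊓ v`, which lies in `V`, and then up to `v`. Hence for an edge `v v'` in
direction `i` with `v_i = 1`, the vertices closer to `v` form `W_{(i,1)}` and those closer to
`v'` form `W_{(i,0)}`, and clearing coordinate `i` injects `W_{(i,1)}` into `W_{(i,0)}`.
The edges in direction `i` are exactly the pairs `v, v - e_i` with `v ∈ W_{(i,1)}`, so each
direction contributes `|W_{(i,1)}| · (|W_{(i,0)}| - |W_{(i,1)}|)`.
-/

open Finset Function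

section BoolVector

variable {ι : Type*} [Fintype ι]

lemma hammingDist_inf_add_hammingDist_inf (a b : ι → Bool) :
    hammingDist a (a ⊓ b) + hammingDist b (a ⊓ b) = hammingDist a b := by
  simp only [hammingDist, card_filter, ← sum_add_distrib, Pi.inf_apply]
  refine sum_congr rfl fun k _ => ?_
  cases a k <;> cases b k <;> rfl

variable [DecidableEq ι]

lemma hammingDist_update_not_of_eq {w a : ι → Bool} {j : ι} (h : w j = a j) :
    hammingDist w (update a j (!a j)) = hammingDist w a + 1 := by
  have : univ.filter (fun k => w k ≠ update a j (!a j) k) =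
      insert j (univ.filter fun k => w k ≠ a k) := by
    ext k
    rcases eq_or_ne k j with rfl | hk <;> simp [*]
  rw [hammingDist, this, card_insert_of_notMem (by simp [h]), hammingDist]

lemma hammingDist_update_not_of_ne {w a : ι → Bool} {j : ι} (h : w j ≠ a j) :
    hammingDist w (update a j (!a j)) + 1 = hammingDist w a := by
  have : univ.filter (fun k => w k ≠ update a j (!a j) k) =
      (univ.filter fun k => w k ≠ a k).erase j := by
    ext k
    rcases eq_or_ne k j with rfl | hk
    · simpa using h
    · simp [hk]
  rw [hammingDist, this, card_erase_add_one (by simpa using h), hammingDist]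

lemma hammingDist_lt_update_not_iff {w a : ι → Bool} {j : ι} :
    hammingDist w a < hammingDist w (update a j (!a j)) ↔ w j = a j := by
  by_cases h : w j = a j
  · simp [hammingDist_update_not_of_eq h, h]
  · have := hammingDist_update_not_of_ne h
    simp only [h, iff_false]
    omega

lemma hammingDist_update_not_self (a : ι → Bool) (j : ι) :
    hammingDist a (update a j (!a j)) = 1 := by
  simp [hammingDist_update_not_of_eq rfl]

lemma exists_eq_update_not_of_hammingDist_eq_one {a b : ι → Bool} (h : hammingDist a b = 1) :
    ∃ j, b = update a j (!a j) := by
  obtain ⟨j, hj⟩ := card_eq_one.1 h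
  have hdiff : ∀ k, a k ≠ b k ↔ k = j := fun k => by simpa using congrArg (k ∈ ·) hj
  refine ⟨j, funext fun k => ?_⟩
  rcases eq_or_ne k j with rfl | hk
  · have := (hdiff k).2 rfl
    cases hb : b k <;> cases ha : a k <;> simp_all
  · simpa [hk, eq_comm] using mt (hdiff k).1 hk

end BoolVector

section DaisyCube

variable {n : ℕ} {V : Finset (Vtx n)}

lemma DownClosed.mem_of_le (hdc : DownClosed V) {u v : Vtx n} (huv : u ≤ v) (hv : v ∈ V) :
    u ∈ V :=
  hdc u v huv hv

lemma hammingDist_le_length {a b : V} (p : (cubeGraph V).Walk a b) :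
    hammingDist a.1 b.1 ≤ p.length := by
  induction p with
  | nil => simp
  | @cons u x w hadj p ih =>
    have hux : hammingDist u.1 x.1 = 1 := hadj
    have := hammingDist_triangle u.1 x.1 w.1
    rw [SimpleGraph.Walk.length_cons]
    omega

lemma exists_walk_length_eq_hammingDist_of_le (hdc : DownClosed V) {u w : Vtx n} (hu : u ∈ V)
    (hw : w ∈ V) (hwu : w ≤ u) :
    ∃ p : (cubeGraph V).Walk ⟨u, hu⟩ ⟨w, hw⟩, p.length = hammingDist u w := by
  induction h : hammingDist u w generalizing u with
  | zero =>
    obtain rfl := hammingDist_eq_zero.1 h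
    exact ⟨.nil, rfl⟩
  | succ k ih =>
    obtain ⟨j, hj⟩ : ∃ j, w j ≠ u j := by
      by_contra! hwu'
      simp [funext hwu'] at h
    have huj : u j = true := by
      have := lt_of_le_of_ne (hwu j) hj
      revert this
      cases u j <;> simp
    have hstep := hammingDist_update_not_of_ne hj
    set u' := update u j (!u j)
    have hu'u : u' ≤ u := update_le_self_iff.2 (by simp [huj])
    have hwu' : w ≤ u' := le_update_iff.2 ⟨le_of_eq (by simpa [huj] using hj), fun k _ => hwu k⟩
    have hu' : u' ∈ V := hdc.mem_of_le hu'u hu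
    have hadj : (cubeGraph V).Adj ⟨u, hu⟩ ⟨u', hu'⟩ := hammingDist_update_not_self u j
    have hdist : hammingDist u' w = k := by
      rw [hammingDist_comm] at h ⊢
      omega
    obtain ⟨p, hp⟩ := ih hu' hwu' hdist
    exact ⟨.cons hadj p, by simp [hp]⟩

lemma dist_cubeGraph (hdc : DownClosed V) (a b : V) :
    (cubeGraph V).dist a b = hammingDist a.1 b.1 := by
  have hm : a.1 ⊓ b.1 ∈ V := hdc.mem_of_le inf_le_left a.2
  obtain ⟨p, hp⟩ := exists_walk_length_eq_hammingDist_of_le hdc a.2 hm inf_le_left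
  obtain ⟨q, hq⟩ := exists_walk_length_eq_hammingDist_of_le hdc b.2 hm inf_le_right
  have hlen : (p.append q.reverse).length = hammingDist a.1 b.1 := by
    rw [SimpleGraph.Walk.length_append, SimpleGraph.Walk.length_reverse, hp, hq,
      hammingDist_inf_add_hammingDist_inf]
  refine le_antisymm (hlen ▸ SimpleGraph.dist_le _) ?_
  obtain ⟨r, hr⟩ := (p.append q.reverse).reachable.exists_walk_length_eq_dist
  exact hr ▸ hammingDist_le_length r

lemma card_semicube (V : Finset (Vtx n)) (i : Fin n) (χ : Bool) :
    #(semicube V i χ) = Fintype.card {w : V // w.1 i = χ} := by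
  rw [Fintype.card_subtype, univ_eq_attach, semicube,
    filter_attach (fun u : Vtx n => u i = χ), card_map, card_attach]

lemma closerCount_cubeGraph (hdc : DownClosed V) {a b : V} {j : Fin n}
    (hb : b.1 = update a.1 j (!a.1 j)) :
    closerCount (cubeGraph V) a b = #(semicube V j (a.1 j)) := by
  have hcloser : ∀ w : V, (cubeGraph V).dist w a < (cubeGraph V).dist w b ↔ w.1 j = a.1 j :=
    fun w => by rw [dist_cubeGraph hdc, dist_cubeGraph hdc, hb, hammingDist_lt_update_not_iff]
  rw [closerCount, Nat.card_congr (Equiv.subtypeEquivRight hcloser), Nat.card_eq_fintype_card,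
    card_semicube]

lemma card_semicube_true_le_false (hdc : DownClosed V) (j : Fin n) :
    #(semicube V j true) ≤ #(semicube V j false) := by
  refine card_le_card_of_injOn (update · j false) (fun v hv => ?_) fun v hv w hw h => ?_
  · simp only [semicube, coe_filter, Set.mem_ofPred_eq] at hv ⊢
    exact ⟨hdc.mem_of_le (update_le_self_iff.2 (Bool.false_le _)) hv.1, update_self ..⟩
  · simp only [semicube, coe_filter, Set.mem_ofPred_eq] at hv hw
    calc v = update (update v j false) j true := by rw [update_idem, ← hv.2, update_eq_self]
      _ = update (update w j false) j true := congrArg (update · j true) h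
      _ = w := by rw [update_idem, ← hw.2, update_eq_self]

def clearCoord (hdc : DownClosed V) (v : V) (i : Fin n) : V :=
  ⟨update v.1 i false, hdc.mem_of_le (update_le_self_iff.2 (Bool.false_le _)) v.2⟩

lemma clearCoord_apply_self (hdc : DownClosed V) (v : V) (i : Fin n) :
    (clearCoord hdc v i).1 i = false :=
  update_self ..

lemma clearCoord_eq_update_not (hdc : DownClosed V) {v : V} {i : Fin n} (hv : v.1 i = true) :
    (clearCoord hdc v i).1 = update v.1 i (!v.1 i) := by
  simp [clearCoord, hv]

lemma eq_update_not_clearCoord (hdc : DownClosed V) {v : V} {i : Fin n} (hv : v.1 i = true) :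
    v.1 = update (clearCoord hdc v i).1 i (!(clearCoord hdc v i).1 i) := by
  simp [clearCoord, ← hv]

lemma mk_clearCoord_mem_edgeFinset (hdc : DownClosed V) {v : V} {i : Fin n} (hv : v.1 i = true) :
    s(v, clearCoord hdc v i) ∈ (cubeGraph V).edgeFinset := by
  rw [SimpleGraph.mem_edgeFinset, SimpleGraph.mem_edgeSet]
  show hammingDist v.1 (clearCoord hdc v i).1 = 1
  rw [clearCoord_eq_update_not hdc hv, hammingDist_update_not_self]

lemma abs_closerCount_sub_clearCoord (hdc : DownClosed V) {v : V} {i : Fin n}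
    (hv : v.1 i = true) :
    |(closerCount (cubeGraph V) v (clearCoord hdc v i) : ℤ) -
        closerCount (cubeGraph V) (clearCoord hdc v i) v| =
      #(semicube V i false) - #(semicube V i true) := by
  rw [closerCount_cubeGraph hdc (clearCoord_eq_update_not hdc hv),
    closerCount_cubeGraph hdc (eq_update_not_clearCoord hdc hv), hv, clearCoord_apply_self,
    abs_sub_comm, abs_of_nonneg (sub_nonneg.2 (by exact_mod_cast card_semicube_true_le_false hdc i))]

variable (V) in
/-- The disjoint union of the semicubes `W_{(i,1)}`. -/
def pointedSemicubes : Finset (Σ _ : Fin n, V) :=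
  univ.sigma fun i => univ.filter fun v : V => v.1 i = true

lemma mem_pointedSemicubes {x : Σ _ : Fin n, V} : x ∈ pointedSemicubes V ↔ x.2.1 x.1 = true := by
  simp [pointedSemicubes]

def clearEdge (hdc : DownClosed V) (x : Σ _ : Fin n, V) : Sym2 V :=
  s(x.2, clearCoord hdc x.2 x.1)

lemma clearEdge_injOn (hdc : DownClosed V) :
    Set.InjOn (clearEdge hdc) (pointedSemicubes V) := by
  rintro ⟨i, v⟩ hv ⟨k, w⟩ hw h
  simp only [mem_coe, mem_pointedSemicubes] at hv hw
  rcases Sym2.eq_iff.1 h with ⟨rfl, hc⟩ | ⟨rfl, hwv⟩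
  · obtain rfl : i = k := by
      by_contra hik
      simpa [clearCoord, update_of_ne hik, hv] using congrArg (·.1 i) hc
    rfl
  · have hk := congrArg (·.1 k) hwv
    simp only [clearCoord, update_apply] at hk hw
    split_ifs at hk <;> simp_all

lemma clearEdge_surjOn (hdc : DownClosed V) :
    Set.SurjOn (clearEdge hdc) (pointedSemicubes V) (cubeGraph V).edgeFinset := by
  intro e he
  induction e using Sym2.ind with | _ a b => ?_
  rw [mem_coe, SimpleGraph.mem_edgeFinset, SimpleGraph.mem_edgeSet] at he
  obtain ⟨j, hb⟩ := exists_eq_update_not_of_hammingDist_eq_one he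
  cases ha : a.1 j
  · have hbj : b.1 j = true := by simp [hb, ha]
    have hclear : clearCoord hdc b j = a := by
      ext : 1
      rw [clearCoord_eq_update_not hdc hbj, hb, ha]
      simp [← ha]
    exact ⟨⟨j, b⟩, mem_pointedSemicubes.2 hbj, (congrArg (s(b, ·)) hclear).trans Sym2.eq_swap⟩
  · have hclear : clearCoord hdc a j = b :=
      Subtype.ext ((clearCoord_eq_update_not hdc ha).trans hb.symm)
    exact ⟨⟨j, a⟩, mem_pointedSemicubes.2 ha, congrArg (s(a, ·)) hclear⟩

lemma sum_pointedSemicubes {M : Type*} [AddCommMonoid M] (f : Fin n → M) :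
    ∑ x ∈ pointedSemicubes V, f x.1 = ∑ i, #(semicube V i true) • f i := by
  simp only [pointedSemicubes, sum_sigma, sum_const, card_semicube, Fintype.card_subtype]

end DaisyCube

theorem daisy_mostar_eq_general {n : ℕ} (V : Finset (Vtx n))
    (hdc : DownClosed V) :
    (mostar (cubeGraph V) : ℤ) =
      ∑ i : Fin n, ((semicube V i true).card : ℤ) *
        (((semicube V i false).card : ℤ) - ((semicube V i true).card : ℤ)) := by
  simp only [← nsmul_eq_mul, ← sum_pointedSemicubes, mostar, Nat.cast_sum]
  refine (sum_nbij (clearEdge hdc) (fun x hx => ?_) (clearEdge_injOn hdc)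
    (clearEdge_surjOn hdc) fun x hx => ?_).symm
  · exact mk_clearCoord_mem_edgeFinset hdc (mem_pointedSemicubes.1 hx)
  · rw [clearEdge, Sym2.lift_mk, Int.natCast_natAbs,
      abs_closerCount_sub_clearCoord hdc (mem_pointedSemicubes.1 hx)]

/-- For a daisy cube `G`,
`Mo(G) = ∑_{i=1}^n |W_{(i,1)}(G)|·(|W_{(i,0)}(G)| - |W_{(i,1)}(G)|)`. -/
theorem daisy_mostar_eq {n : ℕ} (V : Finset (Vtx n))
    (hne : V.Nonempty) (hdc : DownClosed V) :
    (mostar (cubeGraph V) : ℤ) =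
      ∑ i : Fin n, ((semicube V i true).card : ℤ) *
        (((semicube V i false).card : ℤ) - ((semicube V i true).card : ℤ)) :=
  daisy_mostar_eq_general V hdc
end

section
/- Let G be a daisy cube of dimension n, i.e., the subgraph of the hypercube Q_n induced by a nonempty downward-closed vertex set V ⊆ {0,1}^n. Then G is connected and is an isometric subgraph of Q_n: for all vertices u, v of G, the graph distance between u and v in G equals their Hamming distance (the number of coordinates in which they differ). -/
open SimpleGraph Function

section Hamming

variable {ι : Type*} [Fintype ι] [DecidableEq ι] {β : ι → Type*} [∀ i, DecidableEq (β i)]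

theorem hammingDist_update_self {x : ∀ i, β i} {i : ι} {b : β i} (h : x i ≠ b) :
    hammingDist x (update x i b) = 1 := by
  have hdiff : ({j | x j ≠ update x i b j} : Finset ι) = {i} := by
    ext j
    by_cases hj : j = i <;> simp [hj, h]
  rw [hammingDist, hdiff, Finset.card_singleton]

theorem hammingDist_update_add_one {x y : ∀ i, β i} {i : ι} (h : x i ≠ y i) :
    hammingDist (update x i (y i)) y + 1 = hammingDist x y := by
  have hdiff : ({j | update x i (y i) j ≠ y j} : Finset ι) =
      ({j | x j ≠ y j} : Finset ι).erase i := by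
    ext j
    by_cases hj : j = i <;> simp [hj]
  rw [hammingDist, hdiff, Finset.card_erase_add_one (by simpa using h), hammingDist]

end Hamming

variable {n : ℕ} {V : Finset (Vtx n)}

theorem hammingDist_le_length_of_walk {u v : {x : Vtx n // x ∈ V}} (w : (cubeGraph V).Walk u v) :
    hammingDist u.1 v.1 ≤ w.length := by
  induction w with
  | nil => simp
  | @cons a b c hab w ih =>
    calc hammingDist a.1 c.1 ≤ hammingDist a.1 b.1 + hammingDist b.1 c.1 :=
          hammingDist_triangle _ _ _
      _ ≤ 1 + w.length := by rw [hab]; omega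
      _ = (Walk.cons hab w).length := by rw [Walk.length_cons, add_comm]

theorem DownClosed.update_false_mem_s9 (hdc : DownClosed V) {u : Vtx n} (hu : u ∈ V) (i : Fin n) :
    update u i false ∈ V :=
  hdc _ u (fun j => by by_cases hj : j = i <;> simp [hj]) hu

theorem DownClosed.exists_walk_length_eq_hammingDist (hdc : DownClosed V)
    (u v : {x : Vtx n // x ∈ V}) :
    ∃ w : (cubeGraph V).Walk u v, w.length = hammingDist u.1 v.1 := by
  induction hd : hammingDist u.1 v.1 generalizing u v with
  | zero =>
    obtain rfl : u = v := Subtype.ext (hammingDist_eq_zero.1 hd)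
    exact ⟨.nil, rfl⟩
  | succ d ih =>
    obtain ⟨i, hi⟩ : ∃ i, u.1 i ≠ v.1 i :=
      Function.ne_iff.1 (hammingDist_pos.1 (by omega : 0 < hammingDist u.1 v.1))
    wlog hui : u.1 i = true generalizing u v
    · obtain ⟨w, hw⟩ :=
        this v u (by rwa [hammingDist_comm]) hi.symm (by simpa [hui] using hi.symm)
      exact ⟨w.reverse, by rw [Walk.length_reverse, hw]⟩
    have hvi : v.1 i = false := by simpa [hui] using hi.symm
    let u' : {x : Vtx n // x ∈ V} := ⟨update u.1 i false, hdc.update_false_mem_s9 u.2 i⟩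
    have hadj : (cubeGraph V).Adj u u' := hammingDist_update_self (by simp [hui])
    have hd' : hammingDist u'.1 v.1 = d := by
      change hammingDist (update u.1 i false) v.1 = d
      have := hammingDist_update_add_one hi
      rw [hvi] at this
      omega
    obtain ⟨w, hw⟩ := ih u' v hd'
    exact ⟨.cons hadj w, by rw [Walk.length_cons, hw]⟩

/-- A daisy cube is connected and is an isometric subgraph of `Q_n`:
the graph distance between any two of its vertices equals their Hamming distance. -/
theorem daisy_connected_isometric {n : ℕ} (V : Finset (Vtx n))
    (hne : V.Nonempty) (hdc : DownClosed V) :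
    (cubeGraph V).Connected ∧
      ∀ u v : {x : Vtx n // x ∈ V}, (cubeGraph V).dist u v = hammingDist u.1 v.1 := by
  have hwalk := hdc.exists_walk_length_eq_hammingDist
  have hpre : (cubeGraph V).Preconnected := fun u v =>
    let ⟨w, _⟩ := hwalk u v; ⟨w⟩
  have : Nonempty {x : Vtx n // x ∈ V} := hne.to_subtype
  refine ⟨⟨hpre⟩, fun u v => le_antisymm ?_ ?_⟩
  · obtain ⟨w, hw⟩ := hwalk u v
    exact hw ▸ dist_le w
  · obtain ⟨w, hw⟩ := (hpre u v).exists_walk_length_eq_dist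
    exact hw ▸ hammingDist_le_length_of_walk w
end
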